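/- Let (X,d) be a doubling metric space and (Y,d_Y) an arbitrary metric space. Let p > 1 and α ∈ (0,1), and let f : X → Y be a weak (p,α)-compactly Hölder mapping. Then for every bounded set E ⊆ X with upper Minkowski dimension dim_B E = d_E, the image satisfies dim_B f(E) ≤ p·d_E/(α·p + d_E). -/

import Mathlib

open Filter Metric Set Topology MeasureTheory Bornology
open scoped ENNReal NNReal

noncomputable section

/-- `coverNum E r` is the smallest number of sets of diameter at most `r`
needed to cover `E` (`∞` if no finite cover exists). -/
def coverNum {X : Type*} [MetricSpace X] (E : Set X) (r : ℝ) : ℝ≥0∞ :=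
  ⨅ (n : ℕ) (_ : ∃ U : Fin n → Set X,
      (∀ i, EMetric.diam (U i) ≤ ENNReal.ofReal r) ∧ E ⊆ ⋃ i, U i), (n : ℝ≥0∞)

open scoped Classical in
/-- The upper Minkowski (box-counting) dimension:
`dim_B E = limsup_{r → 0⁺} log N(E,r) / log (1/r)`. -/
def dimB {X : Type*} [MetricSpace X] (E : Set X) : EReal :=
  Filter.limsup
    (fun r : ℝ =>
      if coverNum E r = ⊤ then (⊤ : EReal)
      else ((Real.log (coverNum E r).toReal / Real.log (1 / r) : ℝ) : EReal))
    (𝓝[>] (0:ℝ))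

/-- `X` is doubling with constant `Cd`: every ball of radius `2r` can be covered
by at most `Cd` balls of radius `r`. -/
def DoublingConst (X : Type*) [MetricSpace X] (Cd : ℝ) : Prop :=
  ∀ (x : X) (r : ℝ), 0 < r → ∃ t : Finset X,
    (t.card : ℝ) ≤ Cd ∧ Metric.ball x (2 * r) ⊆ ⋃ y ∈ t, Metric.ball y r

/-- A doubling metric space. -/
def DoublingSpace (X : Type*) [MetricSpace X] : Prop :=
  ∃ Cd : ℝ, 1 ≤ Cd ∧ DoublingConst X Cd

/-- `f : X → Y` is weak `(p,α)`-compactly Hölder: in the situation of the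
compactly Hölder definition there exist constants `C i ≥ 0` with
`diam f(B i) ≤ C i * (diam B i)^α` for every `i` and `Σ (C i)^p ≤ CE`. -/
def WeakCompactlyHolder {X Y : Type*} [MetricSpace X] [MetricSpace Y]
    (p α : ℝ) (f : X → Y) : Prop :=
  ∀ E : Set X, IsCompact E → ∀ ε ∈ Set.Ioo (0:ℝ) 1,
    ∃ rE > (0:ℝ), ∃ CE > (0:ℝ),
      ∀ (I : Type) (_ : Countable I) (c : I → X) (r : ℝ), 0 < r → r < rE →
        (E ⊆ ⋃ i, Metric.ball (c i) r) →
        (Pairwise fun i j => Disjoint (Metric.ball (c i) (ε * r)) (Metric.ball (c j) (ε * r))) →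
        ∃ C : I → ℝ≥0∞,
          (∀ i, EMetric.diam (f '' Metric.ball (c i) r) ≤
              C i * EMetric.diam (Metric.ball (c i) r) ^ α) ∧
          ∑' i, C i ^ p ≤ ENNReal.ofReal CE

/-!
Cover `E` at the dyadic scales `r / 2 ^ j` by maximal separated nets; in a doubling space a ball
of one level contains boundedly many centres of the next. Call a net ball bad if its image has
diameter `> t`. Applied to the disjoint half-balls of a net at scale `ρ`, the weak Hölder condition
bounds the number of bad balls by `C (2ρ) ^ (α p) t ^ (-p)`, a geometric series in `j` that
vanishes at fine scales. The images of the good balls at scale `r` and of the good children of bad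
balls cover `f(E)`, whence `N(f(E), t) ≲ N(E, r) + r ^ (α p) t ^ (-p)`. For `d > dim_B E` the
choice `r = t ^ (p / (α p + d))` makes both terms `≲ t ^ (-p d / (α p + d))`.
-/

section

variable {X Y : Type*} [MetricSpace X] [MetricSpace Y]

theorem DoublingConst.card_le_pow_of_separated {Cd r : ℝ} (h : DoublingConst X Cd) (hr : 0 < r)
    (k : ℕ) {x : X} {S : Finset X} (hS : ↑S ⊆ ball x (2 ^ k * (r / 2)))
    (hsep : (S : Set X).Pairwise fun a b => r ≤ dist a b) :
    (S.card : ℝ) ≤ Cd ^ k := by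
  classical
  induction k generalizing x S with
  | zero =>
    rw [pow_zero, Nat.cast_le_one, Finset.card_le_one]
    intro a ha b hb
    by_contra hab
    have hax := mem_ball.1 (hS ha)
    have hbx := mem_ball'.1 (hS hb)
    have := dist_triangle a x b
    linarith [hsep ha hb hab]
  | succ k ih =>
    obtain ⟨t, ht, hcov⟩ := h x (2 ^ k * (r / 2)) (by positivity)
    have hCd : 0 ≤ Cd := (Nat.cast_nonneg _).trans ht
    have hsub : S ⊆ t.biUnion fun y => S.filter (· ∈ ball y (2 ^ k * (r / 2))) := by
      intro s hs
      have : s ∈ ball x (2 * (2 ^ k * (r / 2))) := by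
        rw [← mul_assoc, ← pow_succ']; exact hS hs
      obtain ⟨y, hy, hsy⟩ := mem_iUnion₂.1 (hcov this)
      exact Finset.mem_biUnion.2 ⟨y, hy, Finset.mem_filter.2 ⟨hs, hsy⟩⟩
    calc (S.card : ℝ)
        ≤ ∑ y ∈ t, ((S.filter (· ∈ ball y (2 ^ k * (r / 2)))).card : ℝ) := by
          exact_mod_cast (Finset.card_le_card hsub).trans Finset.card_biUnion_le
      _ ≤ ∑ _y ∈ t, Cd ^ k := Finset.sum_le_sum fun y _ =>
          ih (fun s hs => (Finset.mem_filter.1 hs).2)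
            (hsep.mono (Finset.coe_subset.2 (Finset.filter_subset _ _)))
      _ ≤ Cd ^ (k + 1) := by
          rw [Finset.sum_const, nsmul_eq_mul, pow_succ']
          exact mul_le_mul_of_nonneg_right ht (pow_nonneg hCd k)

theorem DoublingConst.card_filter_exists_dist_lt_le {Cd r : ℝ} (h : DoublingConst X Cd) (hr : 0 < r)
    (k : ℕ) {S : Finset X}
    (hsep : (S : Set X).Pairwise fun a b => r ≤ dist a b) (B : Finset X) :
    ((S.filter fun y => ∃ x ∈ B, dist y x < 2 ^ k * (r / 2)).card : ℝ) ≤ Cd ^ k * B.card := by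
  classical
  have hsub : (S.filter fun y => ∃ x ∈ B, dist y x < 2 ^ k * (r / 2)) ⊆
      B.biUnion fun x => S.filter (· ∈ ball x (2 ^ k * (r / 2))) := by
    intro y hy
    obtain ⟨hyS, x, hx, hyx⟩ := Finset.mem_filter.1 hy
    exact Finset.mem_biUnion.2 ⟨x, hx, Finset.mem_filter.2 ⟨hyS, hyx⟩⟩
  calc _ ≤ ∑ x ∈ B, ((S.filter (· ∈ ball x (2 ^ k * (r / 2)))).card : ℝ) := by
        exact_mod_cast (Finset.card_le_card hsub).trans Finset.card_biUnion_le
    _ ≤ ∑ _x ∈ B, Cd ^ k := Finset.sum_le_sum fun x _ =>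
        h.card_le_pow_of_separated hr k (fun s hs => (Finset.mem_filter.1 hs).2)
          (hsep.mono (Finset.coe_subset.2 (Finset.filter_subset _ _)))
    _ = Cd ^ k * B.card := by rw [Finset.sum_const, nsmul_eq_mul, mul_comm]

theorem DoublingConst.exists_separated_cover {Cd r : ℝ} (h : DoublingConst X Cd) {E : Set X}
    (hE : IsBounded E) (hr : 0 < r) :
    ∃ S : Finset X, ↑S ⊆ E ∧ (S : Set X).Pairwise (fun a b => r ≤ dist a b) ∧
      E ⊆ ⋃ y ∈ S, ball y r := by
  classical
  rcases E.eq_empty_or_nonempty with rfl | ⟨x, hx⟩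
  · exact ⟨∅, by simp⟩
  obtain ⟨R, hR⟩ := hE.subset_ball x
  obtain ⟨k, hk⟩ := pow_unbounded_of_one_lt (R / (r / 2)) one_lt_two
  have hEk : E ⊆ ball x (2 ^ k * (r / 2)) :=
    hR.trans (ball_subset_ball ((div_le_iff₀ (by positivity)).1 hk.le))
  -- the cardinalities of separated subsets of `E` are bounded, so one of them is maximal
  set P : Set ℕ := {n | ∃ S : Finset X, ↑S ⊆ E ∧
    (S : Set X).Pairwise (fun a b => r ≤ dist a b) ∧ S.card = n}
  have hP : BddAbove P := ⟨⌊Cd ^ k⌋₊, by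
    rintro _ ⟨S, hSE, hS, rfl⟩
    exact Nat.le_floor (h.card_le_pow_of_separated hr k (hSE.trans hEk) hS)⟩
  obtain ⟨S, hSE, hS, hcard⟩ := Nat.sSup_mem (⟨0, ∅, by simp⟩ : P.Nonempty) hP
  refine ⟨S, hSE, hS, fun y hy => ?_⟩
  by_contra hyS
  simp only [mem_iUnion, mem_ball, not_exists, not_lt] at hyS
  have hy' : y ∉ S := fun h' => (hyS y h').not_gt (by simpa using hr)
  have hins : Finset.card (insert y S) ∈ P := by
    refine ⟨insert y S, ?_, ?_, rfl⟩
    · rw [Finset.coe_insert]; exact insert_subset hy hSE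
    · rw [Finset.coe_insert]
      exact hS.insert fun b hb _ => ⟨hyS b hb, dist_comm y b ▸ hyS b hb⟩
  have := le_csSup hP hins
  rw [Finset.card_insert_of_notMem hy'] at this
  omega

theorem coverNum_le_card {A : Set X} {t : ℝ} (T : Finset (Set X))
    (hdiam : ∀ U ∈ T, ediam U ≤ ENNReal.ofReal t) (hcov : A ⊆ ⋃ U ∈ T, U) :
    coverNum A t ≤ T.card := by
  refine iInf₂_le_of_le T.card ⟨fun i => T.equivFin.symm i, fun i => hdiam _ (T.equivFin.symm i).2,
    fun a ha => ?_⟩ le_rfl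
  obtain ⟨U, hU, haU⟩ := mem_iUnion₂.1 (hcov ha)
  exact mem_iUnion.2 ⟨T.equivFin ⟨U, hU⟩, by simpa using haU⟩

theorem card_le_coverNum_of_separated {E : Set X} {r ρ : ℝ} (hρ : 0 ≤ ρ) (hρr : ρ < r)
    {S : Finset X} (hSE : ↑S ⊆ E) (hsep : (S : Set X).Pairwise fun a b => r ≤ dist a b) :
    (S.card : ℝ≥0∞) ≤ coverNum E ρ := by
  refine le_iInf₂ fun n ⟨U, hdiam, hcov⟩ => ?_
  -- a set of diameter `ρ < r` contains at most one point of `S`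
  have := Finset.card_le_card_of_forall_subsingleton (fun x i => x ∈ U i)
    (s := S) (t := Finset.univ) (fun x hx => by simpa using hcov (hSE hx))
    (fun i _ a ⟨ha, hai⟩ b ⟨hb, hbi⟩ => by
      by_contra hab
      have := (edist_le_ediam_of_mem hai hbi).trans (hdiam i)
      rw [edist_dist, ENNReal.ofReal_le_ofReal_iff hρ] at this
      exact (hsep ha hb hab).not_gt (this.trans_lt hρr))
  exact_mod_cast this.trans (by simp)

theorem coverNum_empty (r : ℝ) : coverNum (∅ : Set X) r = 0 :=
  nonpos_iff_eq_zero.1 <| iInf₂_le_of_le 0 ⟨Fin.elim0, fun i => i.elim0, empty_subset _⟩ (by simp)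

theorem one_le_coverNum {E : Set X} (hE : E.Nonempty) (r : ℝ) : 1 ≤ coverNum E r := by
  refine le_iInf₂ fun n ⟨U, _, hcov⟩ => ?_
  obtain ⟨x, hx⟩ := hE
  obtain ⟨i, -⟩ := mem_iUnion.1 (hcov hx)
  exact Nat.one_le_cast.2 i.pos

theorem dimB_nonneg (E : Set X) : 0 ≤ dimB E := by
  refine le_limsup_of_frequently_le (Eventually.frequently ?_) (by isBoundedDefault)
  filter_upwards [Ioo_mem_nhdsGT (zero_lt_one' ℝ)] with ρ ⟨hρ0, hρ1⟩
  split_ifs with htop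
  · exact le_top
  have hlog : 0 ≤ Real.log (coverNum E ρ).toReal := by
    rcases E.eq_empty_or_nonempty with rfl | hE
    · simp [coverNum_empty]
    · exact Real.log_nonneg (by simpa using ENNReal.toReal_mono htop (one_le_coverNum hE ρ))
  have : 0 < Real.log (1 / ρ) := Real.log_pos ((one_lt_div hρ0).2 hρ1)
  exact EReal.coe_nonneg.2 (div_nonneg hlog this.le)

theorem eventually_coverNum_le_of_dimB_lt {E : Set X} {d : ℝ} (h : dimB E < d) :
    ∀ᶠ ρ in 𝓝[>] 0, coverNum E ρ ≤ ENNReal.ofReal (ρ ^ (-d)) := by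
  filter_upwards [eventually_lt_of_limsup_lt h, Ioo_mem_nhdsGT (zero_lt_one' ℝ)]
    with ρ hρ ⟨hρ0, hρ1⟩
  split_ifs at hρ with htop
  · exact absurd hρ (by simp)
  rw [ENNReal.le_ofReal_iff_toReal_le htop (by positivity)]
  rcases (ENNReal.toReal_nonneg (a := coverNum E ρ)).eq_or_lt with h0 | h0
  · rw [← h0]; positivity
  have hlog : 0 < Real.log (1 / ρ) := Real.log_pos ((one_lt_div hρ0).2 hρ1)
  refine le_of_lt ?_
  rw [← Real.log_lt_log_iff h0 (by positivity), Real.log_rpow hρ0]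
  have := (div_lt_iff₀ hlog).1 (EReal.coe_lt_coe_iff.1 hρ)
  rw [one_div, Real.log_inv] at this
  linarith

theorem dimB_le_of_eventually_coverNum_le {A : Set X} {s K : ℝ} (hs : 0 ≤ s) (hK : 1 ≤ K)
    (h : ∀ᶠ t in 𝓝[>] 0, coverNum A t ≤ ENNReal.ofReal (K * t ^ (-s))) : dimB A ≤ s := by
  have hlog : Tendsto (fun t : ℝ => Real.log (1 / t)) (𝓝[>] 0) atTop := by
    simpa only [one_div, Function.comp_def] using
      Real.tendsto_log_atTop.comp tendsto_inv_nhdsGT_zero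
  have hlim : Tendsto (fun t : ℝ => ((s + Real.log K / Real.log (1 / t) : ℝ) : EReal))
      (𝓝[>] 0) (𝓝 s) := by
    refine EReal.tendsto_coe.2 ?_
    simpa using (tendsto_const_nhds (x := s)).add (tendsto_const_nhds.div_atTop hlog)
  refine (limsup_le_limsup ?_ (by isBoundedDefault) (by isBoundedDefault)).trans_eq hlim.limsup_eq
  filter_upwards [h, Ioo_mem_nhdsGT (zero_lt_one' ℝ)] with t hN ⟨ht0, ht1⟩
  have htop : coverNum A t ≠ ⊤ := ne_top_of_le_ne_top ENNReal.ofReal_ne_top hN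
  have hpos : 0 < Real.log (1 / t) := Real.log_pos ((one_lt_div ht0).2 ht1)
  have hbound : 1 ≤ K * t ^ (-s) :=
    one_le_mul_of_one_le_of_one_le hK (Real.one_le_rpow_of_pos_of_le_one_of_nonpos ht0 ht1.le
      (neg_nonpos.2 hs))
  -- `log N ≤ log (K t^(-s)) = log K + s log (1/t)`, also when `N = 0` since `log 0 = 0`
  have hlogN : Real.log (coverNum A t).toReal ≤ Real.log K + s * Real.log (1 / t) := by
    have : Real.log (K * t ^ (-s)) = Real.log K + s * Real.log (1 / t) := by
      rw [Real.log_mul (by positivity) (by positivity), Real.log_rpow ht0, one_div,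
        Real.log_inv]
      ring
    rw [← this]
    rcases (ENNReal.toReal_nonneg (a := coverNum A t)).eq_or_lt with h0 | h0
    · rw [← h0, Real.log_zero]; exact Real.log_nonneg hbound
    · exact Real.log_le_log h0 ((ENNReal.toReal_le_of_le_ofReal (by positivity) hN))
  rw [if_neg htop]
  refine EReal.coe_le_coe_iff.2 ((div_le_iff₀ hpos).2 ?_)
  rw [add_mul, div_mul_cancel₀ _ hpos.ne']
  linarith

theorem ediam_ball_le (x : X) (ρ : ℝ) : ediam (ball x ρ) ≤ ENNReal.ofReal (2 * ρ) := by
  rw [← eball_ofReal, ENNReal.ofReal_mul zero_le_two, ENNReal.ofReal_ofNat]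
  exact ediam_eball_le

open scoped Classical in
def badCenters (f : X → Y) (S : Finset X) (ρ t : ℝ) : Finset X :=
  S.filter fun y => ENNReal.ofReal t < ediam (f '' ball y ρ)

theorem WeakCompactlyHolder.exists_card_mul_rpow_le {p α : ℝ} {f : X → Y}
    (hf : WeakCompactlyHolder p α f) (hp : 0 < p) (hα : 0 ≤ α) :
    ∃ rE > 0, ∃ CE > 0, ∀ (B : Finset X) (ρ t : ℝ), 0 < ρ → ρ < rE → 0 ≤ t →
      (B : Set X).Pairwise (fun a b => ρ ≤ dist a b) →
      (∀ x ∈ B, ENNReal.ofReal t < ediam (f '' ball x ρ)) →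
      (B.card : ℝ) * t ^ p ≤ CE * (2 * ρ) ^ (α * p) := by
  -- for the empty compact set the covering condition is void: the constants are uniform over
  -- all separated families of balls
  obtain ⟨rE, hrE, CE, hCE, H⟩ := hf ∅ isCompact_empty (1 / 2) ⟨by norm_num, by norm_num⟩
  refine ⟨rE, hrE, CE, hCE, fun B ρ t hρ hρE ht hsep hbad => ?_⟩
  set c : Fin B.card → X := fun i => B.equivFin.symm i
  have hdisj : Pairwise fun i j => Disjoint (ball (c i) (1 / 2 * ρ)) (ball (c j) (1 / 2 * ρ)) :=
    fun i j hij => ball_disjoint_ball <| by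
      have := hsep (B.equivFin.symm i).2 (B.equivFin.symm j).2
        (fun h => hij (B.equivFin.symm.injective (Subtype.ext h)))
      linarith
  obtain ⟨C, hCdiam, hCsum⟩ := H (Fin B.card) inferInstance c ρ hρ hρE (empty_subset _) hdisj
  have hC (i) : ENNReal.ofReal (t ^ p) ≤ C i ^ p * ENNReal.ofReal ((2 * ρ) ^ (α * p)) := by
    have h1 : ENNReal.ofReal t ≤ C i * ENNReal.ofReal ((2 * ρ) ^ α) := by
      refine (hbad _ (B.equivFin.symm i).2).le.trans ((hCdiam i).trans (mul_le_mul_right ?_ _))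
      rw [← ENNReal.ofReal_rpow_of_nonneg (by positivity) hα]
      exact ENNReal.rpow_le_rpow (ediam_ball_le _ _) hα
    calc ENNReal.ofReal (t ^ p) = ENNReal.ofReal t ^ p :=
          (ENNReal.ofReal_rpow_of_nonneg ht hp.le).symm
      _ ≤ (C i * ENNReal.ofReal ((2 * ρ) ^ α)) ^ p := ENNReal.rpow_le_rpow h1 hp.le
      _ = _ := by
        rw [ENNReal.mul_rpow_of_nonneg _ _ hp.le,
          ENNReal.ofReal_rpow_of_nonneg (by positivity) hp.le,
          ← Real.rpow_mul (by positivity)]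
  refine (ENNReal.ofReal_le_ofReal_iff (by positivity)).1 ?_
  calc ENNReal.ofReal (B.card * t ^ p) = ∑ _i : Fin B.card, ENNReal.ofReal (t ^ p) := by
        simp [ENNReal.ofReal_mul]
    _ ≤ ∑ i, C i ^ p * ENNReal.ofReal ((2 * ρ) ^ (α * p)) := Finset.sum_le_sum fun i _ => hC i
    _ = (∑' i, C i ^ p) * ENNReal.ofReal ((2 * ρ) ^ (α * p)) := by rw [tsum_fintype, Finset.sum_mul]
    _ ≤ ENNReal.ofReal CE * ENNReal.ofReal ((2 * ρ) ^ (α * p)) := mul_le_mul_left hCsum _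
    _ = ENNReal.ofReal (CE * (2 * ρ) ^ (α * p)) := (ENNReal.ofReal_mul hCE.le).symm

theorem exists_cover_image_of_subset_iUnion_ball (f : X → Y) {Z : Set X} {C : Finset X}
    {ρ : ℝ} (t : ℝ) (hZ : Z ⊆ ⋃ y ∈ C, ball y ρ) :
    ∃ T : Finset (Set Y), (∀ U ∈ T, ediam U ≤ ENNReal.ofReal t) ∧ T.card ≤ C.card ∧
      f '' Z ⊆ (⋃ U ∈ T, U) ∪ f '' (Z ∩ ⋃ y ∈ badCenters f C ρ t, ball y ρ) := by
  classical
  refine ⟨(C.image fun y => f '' ball y ρ).filter (ediam · ≤ ENNReal.ofReal t),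
    fun U hU => (Finset.mem_filter.1 hU).2,
    (Finset.card_filter_le _ _).trans Finset.card_image_le, ?_⟩
  rintro _ ⟨z, hz, rfl⟩
  obtain ⟨y, hy, hzy⟩ := mem_iUnion₂.1 (hZ hz)
  by_cases hgood : ediam (f '' ball y ρ) ≤ ENNReal.ofReal t
  · exact Or.inl <| mem_iUnion₂.2 ⟨_, Finset.mem_filter.2 ⟨Finset.mem_image_of_mem _ hy, hgood⟩,
      mem_image_of_mem f hzy⟩
  · refine Or.inr <| mem_image_of_mem f ⟨hz, mem_iUnion₂.2 ⟨y, ?_, hzy⟩⟩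
    simpa [badCenters, hy] using hgood

theorem DoublingConst.exists_cover_image_of_nets {Cd : ℝ} (h : DoublingConst X Cd) (f : X → Y)
    {E : Set X} {S : ℕ → Finset X} {r : ℝ} (hr : 0 < r) (t : ℝ)
    (hsep : ∀ j, (S j : Set X).Pairwise fun a b => r / 2 ^ j ≤ dist a b)
    (hcov : ∀ j, E ⊆ ⋃ y ∈ S j, ball y (r / 2 ^ j)) (k : ℕ) :
    ∃ T : Finset (Set Y), (∀ U ∈ T, ediam U ≤ ENNReal.ofReal t) ∧
      (T.card : ℝ) ≤ (S 0).card +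
        Cd ^ 3 * ∑ j ∈ Finset.range k, (badCenters f (S j) (r / 2 ^ j) t).card ∧
      f '' E ⊆ (⋃ U ∈ T, U) ∪
        f '' (E ∩ ⋃ y ∈ badCenters f (S k) (r / 2 ^ k) t, ball y (r / 2 ^ k)) := by
  classical
  induction k with
  | zero =>
    obtain ⟨T, hT, hcard, hsub⟩ := exists_cover_image_of_subset_iUnion_ball f t (hcov 0)
    exact ⟨T, hT, by simpa using hcard, by simpa using hsub⟩
  | succ k ih =>
    obtain ⟨T, hT, hcard, hsub⟩ := ih
    set ρ := r / 2 ^ (k + 1)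
    have hρ : r / 2 ^ k = 2 * ρ := by simp only [ρ, pow_succ]; ring
    set B := badCenters f (S k) (r / 2 ^ k) t
    -- the balls of the next net meeting a bad ball have centres near a bad centre
    set C := (S (k + 1)).filter fun y => ∃ x ∈ B, dist y x < 2 ^ 3 * (ρ / 2)
    have hZ : E ∩ ⋃ x ∈ B, ball x (r / 2 ^ k) ⊆ ⋃ y ∈ C, ball y ρ := by
      rintro z ⟨hz, hzB⟩
      obtain ⟨x, hx, hzx⟩ := mem_iUnion₂.1 hzB
      obtain ⟨y, hy, hzy⟩ := mem_iUnion₂.1 (hcov (k + 1) hz)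
      refine mem_iUnion₂.2 ⟨y, Finset.mem_filter.2 ⟨hy, x, hx, ?_⟩, hzy⟩
      rw [hρ, mem_ball] at hzx
      have hzy' : dist z y < ρ := hzy
      linarith [dist_triangle_left y x z, show 0 < ρ by positivity]
    obtain ⟨T', hT', hcard', hsub'⟩ := exists_cover_image_of_subset_iUnion_ball f t hZ
    refine ⟨T ∪ T', fun U hU => (Finset.mem_union.1 hU).elim (hT U) (hT' U), ?_, ?_⟩
    · have hC : (C.card : ℝ) ≤ Cd ^ 3 * B.card :=
        h.card_filter_exists_dist_lt_le (by positivity) 3 (hsep (k + 1)) B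
      calc ((T ∪ T').card : ℝ) ≤ T.card + C.card := by
            exact_mod_cast (Finset.card_union_le T T').trans (Nat.add_le_add_left hcard' _)
        _ ≤ _ := by rw [Finset.sum_range_succ, Nat.cast_add, mul_add]; linarith
    · rw [Finset.set_biUnion_union]
      refine hsub.trans (union_subset (subset_union_left.trans subset_union_left)
        (hsub'.trans (union_subset_union_left _ subset_union_right |>.trans
          (union_subset_union_right _ (image_mono (inter_subset_inter inter_subset_left ?_))))))
      exact biUnion_subset_biUnion_left (Finset.coe_subset.2
        (Finset.filter_subset_filter _ (Finset.filter_subset _ _)))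

theorem DoublingConst.coverNum_image_le_of_nets {Cd : ℝ} (h : DoublingConst X Cd) (hCd : 0 ≤ Cd)
    (f : X → Y) {E : Set X} {S : ℕ → Finset X} {r : ℝ} (hr : 0 < r) (t : ℝ)
    (hsep : ∀ j, (S j : Set X).Pairwise fun a b => r / 2 ^ j ≤ dist a b)
    (hcov : ∀ j, E ⊆ ⋃ y ∈ S j, ball y (r / 2 ^ j)) {A q : ℝ} (hA : 0 ≤ A) (hq0 : 0 ≤ q)
    (hq1 : q < 1) (hbad : ∀ j, ((badCenters f (S j) (r / 2 ^ j) t).card : ℝ) ≤ A * q ^ j) :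
    coverNum (f '' E) t ≤ (S 0).card + ENNReal.ofReal (Cd ^ 3 * (A / (1 - q))) := by
  obtain ⟨m, hm⟩ : ∃ m, badCenters f (S m) (r / 2 ^ m) t = ∅ := by
    obtain ⟨m, hm⟩ := ((tendsto_pow_atTop_nhds_zero_of_lt_one hq0 hq1).const_mul A
      |>.eventually (gt_mem_nhds (by simp : A * 0 < 1))).exists
    exact ⟨m, Finset.card_eq_zero.1 (Nat.lt_one_iff.1 (by exact_mod_cast (hbad m).trans_lt hm))⟩
  obtain ⟨T, hT, hcard, hsub⟩ := h.exists_cover_image_of_nets f hr t hsep hcov m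
  simp only [hm, Finset.notMem_empty, iUnion_of_empty, iUnion_empty, inter_empty, image_empty,
    union_empty] at hsub
  have hsum : ∑ j ∈ Finset.range m, ((badCenters f (S j) (r / 2 ^ j) t).card : ℝ) ≤
      A / (1 - q) :=
    calc _ ≤ ∑ j ∈ Finset.range m, A * q ^ j := Finset.sum_le_sum fun j _ => hbad j
      _ = A * ∑ j ∈ Finset.range m, q ^ j := (Finset.mul_sum _ _ _).symm
      _ ≤ A * (q ^ 0 / (1 - q)) := mul_le_mul_of_nonneg_left
          (Finset.range_eq_Ico m ▸ geom_sum_Ico_le_of_lt_one hq0 hq1) hA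
      _ = A / (1 - q) := by rw [pow_zero, mul_one_div]
  calc coverNum (f '' E) t ≤ T.card := coverNum_le_card T hT hsub
    _ = ENNReal.ofReal T.card := (ENNReal.ofReal_natCast _).symm
    _ ≤ ENNReal.ofReal ((S 0).card + Cd ^ 3 * (A / (1 - q))) := by
      refine ENNReal.ofReal_le_ofReal ((Nat.cast_sum (R := ℝ) _ _ ▸ hcard).trans ?_)
      gcongr
    _ ≤ _ := by rw [← ENNReal.ofReal_natCast]; exact ENNReal.ofReal_add_le

theorem rpow_two_mul_div_two_pow {r : ℝ} (hr : 0 ≤ r) (a : ℝ) (j : ℕ) :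
    (2 * (r / 2 ^ j)) ^ a = (2 * r) ^ a * ((2 : ℝ) ^ (-a)) ^ j := by
  rw [mul_div_assoc', div_eq_mul_inv, Real.mul_rpow (by positivity) (by positivity),
    Real.inv_rpow (by positivity), ← Real.rpow_pow_comm zero_le_two, Real.rpow_neg zero_le_two,
    inv_pow]

theorem coverNum_image_le_add {p α : ℝ} {f : X → Y} (hX : DoublingSpace X) (hp : 0 < p)
    (hα : 0 < α) (hf : WeakCompactlyHolder p α f) {E : Set X} (hE : IsBounded E) :
    ∃ K r₀ : ℝ, 0 ≤ K ∧ 0 < r₀ ∧ ∀ r ∈ Ioo 0 r₀, ∀ t > 0,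
      coverNum (f '' E) t ≤ coverNum E r + ENNReal.ofReal (K * r ^ (α * p) / t ^ p) := by
  obtain ⟨Cd, hCd1, hCd⟩ := hX
  obtain ⟨rE, hrE, CE, hCE, hcount⟩ := hf.exists_card_mul_rpow_le hp hα.le
  set q : ℝ := (2 : ℝ) ^ (-(α * p))
  have hq0 : 0 < q := by positivity
  have hq1 : q < 1 := Real.rpow_lt_one_of_one_lt_of_neg one_lt_two (by nlinarith)
  refine ⟨Cd ^ 3 * CE * 4 ^ (α * p) / (1 - q), rE / 2, by have := sub_pos.2 hq1; positivity,
    by positivity, fun r ⟨hr, hrE'⟩ t ht => ?_⟩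
  choose S hSE hSsep hScov using fun j : ℕ =>
    hCd.exists_separated_cover hE (by positivity : 0 < 2 * r / 2 ^ j)
  set A := CE * 4 ^ (α * p) * r ^ (α * p) / t ^ p
  have hA : 0 ≤ A := by positivity
  have hbad (j : ℕ) : ((badCenters f (S j) (2 * r / 2 ^ j) t).card : ℝ) ≤ A * q ^ j := by
    have hcard := hcount (badCenters f (S j) (2 * r / 2 ^ j) t) (2 * r / 2 ^ j) t (by positivity)
      ((div_le_self (by positivity) (one_le_pow₀ one_le_two)).trans_lt (by linarith)) ht.le
      ((hSsep j).mono (Finset.coe_subset.2 (Finset.filter_subset _ _)))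
      (fun x hx => (Finset.mem_filter.1 hx).2)
    have hscale : (2 * (2 * r / 2 ^ j)) ^ (α * p) = 4 ^ (α * p) * r ^ (α * p) * q ^ j := by
      rw [rpow_two_mul_div_two_pow (by positivity), ← mul_assoc, Real.mul_rpow (by norm_num) hr.le,
        show (2 : ℝ) * 2 = 4 by norm_num]
    rw [hscale] at hcard
    rw [show A * q ^ j = CE * (4 ^ (α * p) * r ^ (α * p) * q ^ j) / t ^ p by ring]
    exact (le_div_iff₀ (by positivity)).2 hcard
  have hCd0 : 0 ≤ Cd := zero_le_one.trans hCd1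
  calc coverNum (f '' E) t ≤ (S 0).card + ENNReal.ofReal (Cd ^ 3 * (A / (1 - q))) :=
        hCd.coverNum_image_le_of_nets hCd0 f (by positivity) t hSsep hScov hA hq0.le hq1 hbad
    _ ≤ coverNum E r + ENNReal.ofReal (Cd ^ 3 * (A / (1 - q))) := by
      gcongr
      exact card_le_coverNum_of_separated hr.le (by norm_num; linarith) (hSE 0) (hSsep 0)
    _ = _ := by congr 2; ring

theorem tendsto_rpow_nhdsGT_zero {β : ℝ} (hβ : 0 < β) :
    Tendsto (fun t : ℝ => t ^ β) (𝓝[>] 0) (𝓝[>] 0) := by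
  refine tendsto_nhdsWithin_iff.2 ⟨?_, eventually_nhdsWithin_of_forall fun t ht => ?_⟩
  · simpa [Real.zero_rpow hβ.ne'] using
      ((Real.continuousAt_rpow_const 0 β (Or.inr hβ.le)).tendsto).mono_left nhdsWithin_le_nhds
  · exact Real.rpow_pos_of_pos ht β

theorem dimB_image_le_of_dimB_lt {p α d : ℝ} {f : X → Y} (hX : DoublingSpace X) (hp : 0 < p)
    (hα : 0 < α) (hf : WeakCompactlyHolder p α f) {E : Set X} (hE : IsBounded E)
    (hd : dimB E < d) (hd0 : 0 ≤ d) :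
    dimB (f '' E) ≤ ((p * d / (α * p + d) : ℝ) : EReal) := by
  obtain ⟨K, r₀, hK, hr₀, hest⟩ := coverNum_image_le_add hX hp hα hf hE
  set s := p * d / (α * p + d)
  -- the scale `r = t ^ β` balances `r ^ (-d)` against `r ^ (α p) / t ^ p`: both become `t ^ (-s)`
  set β := p / (α * p + d)
  have hβ : 0 < β := by positivity
  have hexp_cover : β * -d = -s := by simp only [β, s]; ring
  have hexp_holder : β * (α * p) - p = -s := by
    simp only [β, s]; field_simp; ring
  have hβ' := tendsto_rpow_nhdsGT_zero hβ
  refine dimB_le_of_eventually_coverNum_le (by positivity) (le_add_of_nonneg_right hK) ?_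
  filter_upwards [hβ'.eventually (eventually_coverNum_le_of_dimB_lt hd),
    hβ'.eventually (Ioo_mem_nhdsGT hr₀), self_mem_nhdsWithin] with t hcov hr (ht : 0 < t)
  calc coverNum (f '' E) t
      ≤ coverNum E (t ^ β) + ENNReal.ofReal (K * (t ^ β) ^ (α * p) / t ^ p) := hest _ hr t ht
    _ ≤ ENNReal.ofReal ((t ^ β) ^ (-d)) + ENNReal.ofReal (K * (t ^ β) ^ (α * p) / t ^ p) := by
      gcongr
    _ = ENNReal.ofReal ((1 + K) * t ^ (-s)) := by
      rw [← ENNReal.ofReal_add (by positivity) (by positivity), ← Real.rpow_mul ht.le,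
        ← Real.rpow_mul ht.le, mul_div_assoc, ← Real.rpow_sub ht, hexp_cover, hexp_holder]
      ring_nf

end

/-- If `X` is doubling, `f : X → Y` is weak `(p,α)`-compactly Hölder,
and `E ⊆ X` is bounded with `dim_B E = dE`, then
`dim_B f(E) ≤ p dE / (α p + dE)`. -/
theorem minkowski_distortion_of_weakCompactlyHolder
    {X Y : Type*} [MetricSpace X] [MetricSpace Y] (hX : DoublingSpace X)
    {p α : ℝ} (hp : 1 < p) (hα : α ∈ Set.Ioo (0:ℝ) 1)
    {f : X → Y} (hf : WeakCompactlyHolder p α f)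
    {E : Set X} (hE : IsBounded E) {dE : ℝ} (hdE : dimB E = (dE : EReal)) :
    dimB (f '' E) ≤ ((p * dE / (α * p + dE) : ℝ) : EReal) := by
  have hdE0 : 0 ≤ dE := EReal.coe_nonneg.1 (hdE ▸ dimB_nonneg E)
  have hden : α * p + dE ≠ 0 := by nlinarith [hα.1]
  have hlim : Tendsto (fun d : ℝ => ((p * d / (α * p + d) : ℝ) : EReal)) (𝓝[>] dE)
      (𝓝 ((p * dE / (α * p + dE) : ℝ) : EReal)) :=
    (continuous_coe_real_ereal.tendsto _).comp
      ((ContinuousAt.div (by fun_prop) (by fun_prop) hden).tendsto.mono_left nhdsWithin_le_nhds)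
  refine ge_of_tendsto hlim (eventually_nhdsWithin_of_forall fun d (hd : dE < d) => ?_)
  exact dimB_image_le_of_dimB_lt hX (by linarith) hα.1 hf hE (hdE ▸ EReal.coe_lt_coe_iff.2 hd)
    (hdE0.trans hd.le)
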